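/- arXiv:1504.05218 — 3 statements merged into one kernel-verified Lean document; each statement's English description precedes it below -/
import Mathlib

section
/- If x and v are points in the plane with ‖x − v‖ < 2, and every point of the obstacle set O is at distance at least √5 from v, and both unit discs B₁(x) and B₁(v) are disjoint from O, then for every point y on the segment from x to v, the unit disc B₁(y) is disjoint from O. -/
/-- If `‖x − v‖ < 2`, every obstacle point is at distance at least `√5` from `v`,
and both unit discs `B₁(x)` and `B₁(v)` are disjoint from the obstacle set `O`
(i.e. every obstacle point is at distance at least `1` from `x` and from `v`),
then for every point `y` on the segment from `x` to `v` the unit disc `B₁(y)`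
is disjoint from `O`. -/
theorem shortcut_disc_free
    (O : Set (EuclideanSpace ℝ (Fin 2)))
    (x v : EuclideanSpace ℝ (Fin 2))
    (hxv : ‖x - v‖ < 2)
    (hsep : ∀ o ∈ O, Real.sqrt 5 ≤ dist v o)
    (hx : ∀ o ∈ O, 1 ≤ dist x o)
    (hv : ∀ o ∈ O, 1 ≤ dist v o) :
    ∀ y ∈ segment ℝ x v, ∀ o ∈ O, 1 ≤ dist y o := by
  rintro y ⟨a, b, ha, hb, hab, rfl⟩ o ho
  have h5 : Real.sqrt 5 ≤ dist v o := hsep o ho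
  have hs5 : Real.sqrt 5 ^ 2 = 5 := Real.sq_sqrt (by norm_num)
  have h5' : (5:ℝ) ≤ dist v o ^ 2 := by
    nlinarith [Real.sqrt_nonneg 5, dist_nonneg (x := v) (y := o)]
  have hx' : (1:ℝ) ≤ dist x o ^ 2 := by nlinarith [hx o ho, dist_nonneg (x := x) (y := o)]
  have hxv' : ‖x - v‖ ^ 2 ≤ 4 := by nlinarith [norm_nonneg (x - v)]
  have hy : a • x + b • v - o = a • (x - o) + b • (v - o) := by
    calc a • x + b • v - o = a • x + b • v - (a + b) • o := by rw [hab, one_smul]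
      _ = a • (x - o) + b • (v - o) := by rw [add_smul, smul_sub, smul_sub]; abel
  have hxvo : x - v = (x - o) - (v - o) := by abel
  have key : ‖a • x + b • v - o‖ ^ 2
      = a * ‖x - o‖ ^ 2 + b * ‖v - o‖ ^ 2 - a * b * ‖x - v‖ ^ 2 := by
    rw [hy, hxvo, norm_add_sq_real, norm_sub_sq_real (x - o) (v - o), norm_smul, norm_smul,
      real_inner_smul_left, real_inner_smul_right,
      Real.norm_eq_abs, Real.norm_eq_abs, abs_of_nonneg ha, abs_of_nonneg hb]
    linear_combination (a * ‖x - o‖ ^ 2 + b * ‖v - o‖ ^ 2) * hab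
  have hd : dist (a • x + b • v) o = ‖a • x + b • v - o‖ := dist_eq_norm _ _
  have hd1 : dist x o = ‖x - o‖ := dist_eq_norm _ _
  have hd2 : dist v o = ‖v - o‖ := dist_eq_norm _ _
  rw [hd1] at hx'
  rw [hd2] at h5'
  have h1 : 1 ≤ ‖a • x + b • v - o‖ ^ 2 := by
    nlinarith [key, mul_nonneg ha hb, sq_nonneg b, hxv']
  rw [hd]
  nlinarith [norm_nonneg (a • x + b • v - o)]
end

section
/- Let v ∈ S ∪ T satisfy dist(v, O) ≥ √5 and let x ∈ F satisfy ‖x − v‖ < 2, where F = {p : dist(p, O) ≥ 1}. Then the length of the straight-line path from x to v is strictly less than 2, and this path is contained in F. -/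
/-!
For a point `o` of the obstacle and `y = (1 - t) x + t v`, the Stewart identity
`‖y - o‖² = (1 - t) ‖x - o‖² + t ‖v - o‖² - t (1 - t) ‖x - v‖²`
together with `‖x - o‖ ≥ 1`, `‖v - o‖² ≥ 5 ≥ 1 + ‖x - v‖²` gives `‖y - o‖² ≥ 1 + t² ‖x - v‖² ≥ 1`.
-/

open Metric

section Segment

variable {E : Type*} [NormedAddCommGroup E] [InnerProductSpace ℝ E]

theorem dist_smul_add_smul_sq_of_add_eq_one {a b : ℝ} (hab : a + b = 1) (x v o : E) :
    dist (a • x + b • v) o ^ 2 =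
      a * dist x o ^ 2 + b * dist v o ^ 2 - a * b * dist x v ^ 2 := by
  obtain rfl : b = 1 - a := by linarith
  have hy : a • x + (1 - a) • v - o = a • (x - o) + (1 - a) • (v - o) := by module
  have hxv : x - v = (x - o) - (v - o) := by abel
  rw [dist_eq_norm, dist_eq_norm, dist_eq_norm, dist_eq_norm, hy, hxv]
  generalize x - o = p, v - o = q
  rw [norm_add_sq_real, norm_sub_sq_real, norm_smul, norm_smul, real_inner_smul_left,
    real_inner_smul_right, mul_pow, mul_pow, Real.norm_eq_abs, Real.norm_eq_abs, sq_abs, sq_abs]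
  ring

theorem le_dist_of_mem_segment {x v o y : E} {r : ℝ} (hx : r ≤ dist x o)
    (hv : r ^ 2 + dist x v ^ 2 ≤ dist v o ^ 2) (hy : y ∈ segment ℝ x v) : r ≤ dist y o := by
  obtain hr | hr := lt_or_ge r 0
  · exact hr.le.trans dist_nonneg
  obtain ⟨a, b, ha, hb, hab, rfl⟩ := hy
  have hx' : r ^ 2 ≤ dist x o ^ 2 := pow_le_pow_left₀ hr hx 2
  have key : r ^ 2 ≤ dist (a • x + b • v) o ^ 2 := by
    rw [dist_smul_add_smul_sq_of_add_eq_one hab]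
    obtain rfl : a = 1 - b := by linarith
    nlinarith [mul_le_mul_of_nonneg_left hx' ha, mul_le_mul_of_nonneg_left hv hb,
      sq_nonneg (b * dist x v)]
  exact (pow_le_pow_iff_left₀ hr dist_nonneg two_ne_zero).1 key

theorem le_infDist_of_mem_segment {s : Set E} {x v y : E} {r : ℝ} (hx : r ≤ infDist x s)
    (hv : r ^ 2 + dist x v ^ 2 ≤ infDist v s ^ 2) (hy : y ∈ segment ℝ x v) :
    r ≤ infDist y s := by
  rcases s.eq_empty_or_nonempty with rfl | hs
  · simpa using hx
  refine (le_infDist hs).2 fun o ho ↦ le_dist_of_mem_segment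
    (hx.trans (infDist_le_dist_of_mem ho)) ?_ hy
  exact hv.trans (pow_le_pow_left₀ infDist_nonneg (infDist_le_dist_of_mem ho) 2)

end Segment

/-- Shortcut lemma: if `dist(v, O) ≥ √5`, `x` is in the free space
`F = {p : dist(p, O) ≥ 1}`, and `‖x − v‖ < 2`, then the straight-line path
from `x` to `v` has length less than `2` and is contained in `F`. -/
theorem shortcut_path_in_free_space
    (O : Set (EuclideanSpace ℝ (Fin 2)))
    (v x : EuclideanSpace ℝ (Fin 2))
    (hv : Real.sqrt 5 ≤ Metric.infDist v O)
    (hx : 1 ≤ Metric.infDist x O)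
    (hxv : ‖x - v‖ < 2) :
    ‖x - v‖ < 2 ∧ ∀ y ∈ segment ℝ x v, 1 ≤ Metric.infDist y O := by
  refine ⟨hxv, fun y hy ↦ le_infDist_of_mem_segment hx ?_ hy⟩
  calc (1 : ℝ) ^ 2 + dist x v ^ 2 ≤ 1 ^ 2 + 2 ^ 2 := by
        rw [dist_eq_norm]; gcongr
    _ = Real.sqrt 5 ^ 2 := by norm_num
    _ ≤ infDist v O ^ 2 := pow_le_pow_left₀ (Real.sqrt_nonneg 5) hv 2
end

section
/- For any point o ∈ ℝ² and any segment [x, v] ⊂ ℝ² with ‖x − v‖ < 2, if ‖o − v‖ ≥ √5 and ‖o − x‖ ≥ 1, then for every y ∈ [x, v], ‖o − y‖ ≥ 1. -/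
/-- Geometric core of the shortcut lemma: a point `o` at distance `≥ √5` from
`v` and `≥ 1` from `x` is at distance `≥ 1` from every point of the segment
`[x, v]`, provided `‖x − v‖ < 2`. -/
theorem point_far_from_segment
    (x v o : EuclideanSpace ℝ (Fin 2))
    (hxv : ‖x - v‖ < 2)
    (hov : Real.sqrt 5 ≤ ‖o - v‖)
    (hox : 1 ≤ ‖o - x‖) :
    ∀ y ∈ segment ℝ x v, 1 ≤ ‖o - y‖ := by
  rintro y ⟨a, b, ha, hb, hab, rfl⟩
  have hA2 : 1 ≤ ‖o - x‖^2 := by nlinarith [norm_nonneg (o - x)]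
  have hB2 : 5 ≤ ‖o - v‖^2 := by
    have h5 : Real.sqrt 5 ^ 2 = 5 := Real.sq_sqrt (by norm_num)
    nlinarith [Real.sqrt_nonneg 5]
  have hd : ‖v - x‖ < 2 := by rwa [norm_sub_rev]
  set c : ℝ := inner ℝ (o - x) (v - x) with hc
  have hBexp : ‖o - v‖^2 = ‖o - x‖^2 - 2*c + ‖v - x‖^2 := by
    have h : o - v = (o - x) - (v - x) := by abel
    rw [h, @norm_sub_sq_real (EuclideanSpace ℝ (Fin 2)) _ _ (o - x) (v - x)]
  have hy : o - (a • x + b • v) = (o - x) - b • (v - x) := by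
    have ha' : a = 1 - b := by linarith
    rw [ha']
    module
  have hyn : ‖o - (a • x + b • v)‖^2
      = ‖o - x‖^2 - 2*(b*c) + b^2*‖v - x‖^2 := by
    rw [hy, @norm_sub_sq_real (EuclideanSpace ℝ (Fin 2)) _ _ (o - x) (b • (v - x)),
      real_inner_smul_right, norm_smul, Real.norm_eq_abs, abs_of_nonneg hb]
    ring
  have hb1 : b ≤ 1 := by linarith
  have hdn : (0:ℝ) ≤ ‖v - x‖ := norm_nonneg _
  have h1 : 2*c ≤ ‖o - x‖^2 + ‖v - x‖^2 - 5 := by linarith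
  have h2 : ‖v - x‖^2 < 4 := by nlinarith
  have hfin : 1 ≤ ‖o - (a • x + b • v)‖^2 := by
    nlinarith [mul_nonneg hb (sub_nonneg.2 hb1), sq_nonneg b,
      mul_nonneg (mul_nonneg hb (sub_nonneg.2 hb1)) (le_of_lt (sub_pos.2 h2)),
      mul_nonneg (sub_nonneg.2 hb1) (sub_nonneg.2 hA2),
      mul_nonneg hb (sub_nonneg.2 h1)]
  nlinarith [norm_nonneg (o - (a • x + b • v))]
end
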